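/- arXiv:2603.07307 — 2 statements merged into one kernel-verified Lean document; each statement's English description precedes it below -/
import Mathlib

section
/- For symmetric matrices A, B ∈ ℝ^{N×N} with eigenvalues α_1 ≤ … ≤ α_N and β_1 ≤ … ≤ β_N, we have Σ_{i=1}^N (α_i − β_i)^2 ≤ ‖A − B‖_F^2 (Hoffman–Wielandt inequality). -/
open Matrix Finset

-- helper 1: equal multisets of values give a permutation
lemma exists_comp_perm {ι : Type*} [Fintype ι] [DecidableEq ι] {f g : ι → ℝ}
    (h : Multiset.map f Finset.univ.val = Multiset.map g Finset.univ.val) :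
    ∃ σ : Equiv.Perm ι, f = g ∘ σ := by
  classical
  have hcard : ∀ c : ℝ, Fintype.card {a // f a = c} = Fintype.card {b // g b = c} := by
    intro c
    have h1 := congrArg (Multiset.count c) h
    rw [Multiset.count_map, Multiset.count_map] at h1
    rw [Fintype.card_subtype, Fintype.card_subtype]
    simp only [Finset.card, Finset.filter_val]
    have e1 : (Finset.univ.val.filter fun a => f a = c) =
        (Finset.univ.val.filter fun a => c = f a) := by
      apply Multiset.filter_congr; intro x _; exact eq_comm
    have e2 : (Finset.univ.val.filter fun a => g a = c) =
        (Finset.univ.val.filter fun a => c = g a) := by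
      apply Multiset.filter_congr; intro x _; exact eq_comm
    rw [e1, e2, h1]
  refine ⟨(Equiv.ofFiberEquiv (fun c => Fintype.equivOfCardEq (hcard c))), ?_⟩
  funext a
  exact (Equiv.ofFiberEquiv_map (fun c => Fintype.equivOfCardEq (hcard c)) a).symm

-- helper 2: pairing inequality for doubly stochastic matrices
lemma ds_pairing {N : ℕ} {S : Matrix (Fin N) (Fin N) ℝ}
    (hS : S ∈ doublyStochastic ℝ (Fin N)) {α β : Fin N → ℝ}
    (hα : Monotone α) (hβ : Monotone β) :
    ∑ i, ∑ j, S i j * (α i * β j) ≤ ∑ i, α i * β i := by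
  obtain ⟨w, hw0, hw1, rfl⟩ := exists_eq_sum_perm_of_mem_doublyStochastic hS
  have hentry : ∀ i j, (∑ σ : Equiv.Perm (Fin N), w σ • σ.permMatrix ℝ) i j
      = ∑ σ : Equiv.Perm (Fin N), (if σ i = j then w σ else 0) := by
    intro i j
    simp [Matrix.sum_apply, Equiv.Perm.permMatrix, PEquiv.toMatrix_apply,
      Equiv.toPEquiv_apply]
  have key : ∀ i, ∑ j, ∑ σ : Equiv.Perm (Fin N),
      (if σ i = j then w σ * (α i * β j) else 0) = ∑ σ : Equiv.Perm (Fin N), w σ * (α i * β (σ i)) := by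
    intro i; rw [Finset.sum_comm]
    refine Finset.sum_congr rfl fun σ _ => ?_
    simp [Finset.sum_ite_eq]
  calc ∑ i, ∑ j, (∑ σ : Equiv.Perm (Fin N), w σ • σ.permMatrix ℝ) i j * (α i * β j)
      = ∑ σ : Equiv.Perm (Fin N), w σ * ∑ i, α i * β (σ i) := by
        simp only [hentry, Finset.sum_mul, ite_mul, zero_mul]
        rw [show (∑ i, ∑ j, ∑ σ : Equiv.Perm (Fin N), (if σ i = j then w σ * (α i * β j) else 0))
            = ∑ i, ∑ σ : Equiv.Perm (Fin N), w σ * (α i * β (σ i)) from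
          Finset.sum_congr rfl fun i _ => key i, Finset.sum_comm]
        simp [Finset.mul_sum]
    _ ≤ ∑ σ : Equiv.Perm (Fin N), w σ * ∑ i, α i * β i := by
        refine Finset.sum_le_sum fun σ _ => ?_
        exact mul_le_mul_of_nonneg_left ((hα.monovary hβ).sum_mul_comp_perm_le_sum_mul) (hw0 σ)
    _ = ∑ i, α i * β i := by rw [← Finset.sum_mul, hw1, one_mul]

/-- Hoffman–Wielandt: for real symmetric `A, B` with eigenvalues
listed in nondecreasing order (with multiplicity) as `α` and `β`,
`Σ (α_i - β_i)² ≤ ‖A - B‖_F²`. -/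
theorem stmt4 (N : ℕ) (A B : Matrix (Fin N) (Fin N) ℝ)
    (hA : A.IsHermitian) (hB : B.IsHermitian)
    (α β : Fin N → ℝ) (hαmono : Monotone α) (hβmono : Monotone β)
    (hα : Multiset.map α Finset.univ.val = Multiset.map hA.eigenvalues Finset.univ.val)
    (hβ : Multiset.map β Finset.univ.val = Multiset.map hB.eigenvalues Finset.univ.val) :
    ∑ i, (α i - β i) ^ 2 ≤ ∑ i, ∑ j, (A i j - B i j) ^ 2 := by
  classical
  obtain ⟨σ, hσ⟩ := exists_comp_perm hα.symm
  obtain ⟨τ, hτ⟩ := exists_comp_perm hβ.symm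
  set a : Fin N → ℝ := hA.eigenvalues with ha
  set b : Fin N → ℝ := hB.eigenvalues with hb
  set P : Matrix (Fin N) (Fin N) ℝ := (hA.eigenvectorUnitary : Matrix (Fin N) (Fin N) ℝ) with hPdef
  set Q : Matrix (Fin N) (Fin N) ℝ := (hB.eigenvectorUnitary : Matrix (Fin N) (Fin N) ℝ) with hQdef
  have hPuP : star P * P = 1 := (Matrix.mem_unitaryGroup_iff').mp hA.eigenvectorUnitary.2
  have hPPu : P * star P = 1 := (Matrix.mem_unitaryGroup_iff).mp hA.eigenvectorUnitary.2
  have hQuQ : star Q * Q = 1 := (Matrix.mem_unitaryGroup_iff').mp hB.eigenvectorUnitary.2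
  have hQQu : Q * star Q = 1 := (Matrix.mem_unitaryGroup_iff).mp hB.eigenvectorUnitary.2
  have hP' : ∀ X : Matrix (Fin N) (Fin N) ℝ, star P * (P * X) = X := fun X => by
    rw [← Matrix.mul_assoc, hPuP, Matrix.one_mul]
  have hQ' : ∀ X : Matrix (Fin N) (Fin N) ℝ, Q * (star Q * X) = X := fun X => by
    rw [← Matrix.mul_assoc, hQQu, Matrix.one_mul]
  set W : Matrix (Fin N) (Fin N) ℝ := star P * Q with hWdef
  have hWWu : W * star W = 1 := by
    rw [hWdef, StarMul.star_mul, star_star, Matrix.mul_assoc, hQ', hPuP]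
  have hP'' : ∀ X : Matrix (Fin N) (Fin N) ℝ, P * (star P * X) = X := fun X => by
    rw [← Matrix.mul_assoc, hPPu, Matrix.one_mul]
  have hQ'' : ∀ X : Matrix (Fin N) (Fin N) ℝ, star Q * (Q * X) = X := fun X => by
    rw [← Matrix.mul_assoc, hQuQ, Matrix.one_mul]
  have hWuW : star W * W = 1 := by
    rw [hWdef, StarMul.star_mul, star_star, Matrix.mul_assoc, hP'', hQuQ]
  have conj_trace : ∀ M : Matrix (Fin N) (Fin N) ℝ,
      trace (P * M * star P) = trace M := fun M => by
    rw [Matrix.mul_assoc, trace_mul_comm, Matrix.mul_assoc, hPuP, Matrix.mul_one]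
  have conj_traceQ : ∀ M : Matrix (Fin N) (Fin N) ℝ,
      trace (Q * M * star Q) = trace M := fun M => by
    rw [Matrix.mul_assoc, trace_mul_comm, Matrix.mul_assoc, hQuQ, Matrix.mul_one]
  have specA : A = P * diagonal a * star P := by
    have := hA.spectral_theorem
    simpa [RCLike.ofReal_real_eq_id] using this
  have specB : B = Q * diagonal b * star Q := by
    have := hB.spectral_theorem
    simpa [RCLike.ofReal_real_eq_id] using this
  -- trace of A*A
  have hAA : trace (A * A) = ∑ i, a i ^ 2 := by
    rw [specA]
    rw [show P * diagonal a * star P * (P * diagonal a * star P)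
        = P * (diagonal a * diagonal a) * star P from by
      simp only [Matrix.mul_assoc, hP', hP'']]
    rw [conj_trace, diagonal_mul_diagonal, trace_diagonal]
    exact Finset.sum_congr rfl fun i _ => (sq (a i)).symm
  have hBB : trace (B * B) = ∑ i, b i ^ 2 := by
    rw [specB]
    rw [show Q * diagonal b * star Q * (Q * diagonal b * star Q)
        = Q * (diagonal b * diagonal b) * star Q from by
      simp only [Matrix.mul_assoc, hQ', hQ'']]
    rw [conj_traceQ, diagonal_mul_diagonal, trace_diagonal]
    exact Finset.sum_congr rfl fun i _ => (sq (b i)).symm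
  -- trace of A*B in terms of W
  have hABW : trace (A * B) = ∑ i, ∑ j, (a i * b j) * W i j ^ 2 := by
    rw [specA, specB]
    have e1 : P * diagonal a * star P * (Q * diagonal b * star Q)
        = P * (diagonal a * W * diagonal b * star W) * star P := by
      simp only [hWdef, StarMul.star_mul, star_star, Matrix.mul_assoc, hPPu, Matrix.mul_one]
    rw [e1, conj_trace, trace]
    refine Finset.sum_congr rfl fun i _ => ?_
    rw [diag_apply, mul_apply]
    refine Finset.sum_congr rfl fun j _ => ?_
    simp only [Matrix.mul_diagonal, Matrix.diagonal_mul, Matrix.star_apply, star_trivial]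
    ring
  -- value sums transfer along the permutations
  have sumA2 : ∑ i, a i ^ 2 = ∑ i, α i ^ 2 := by
    rw [hσ]; exact Equiv.sum_comp σ (fun i => α i ^ 2)
  have sumB2 : ∑ i, b i ^ 2 = ∑ i, β i ^ 2 := by
    rw [hτ]; exact Equiv.sum_comp τ (fun i => β i ^ 2)
  -- the squared entries of W, reindexed, form a doubly stochastic matrix
  set S : Matrix (Fin N) (Fin N) ℝ :=
    Matrix.of (fun i j => W (σ.symm i) (τ.symm j) ^ 2) with hSdef
  have hrow : ∀ i, ∑ j, W i j ^ 2 = 1 := by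
    intro i
    have h1 : (W * star W) i i = 1 := by rw [hWWu]; simp [Matrix.one_apply]
    simpa [Matrix.mul_apply, Matrix.star_apply, sq] using h1
  have hcol : ∀ j, ∑ i, W i j ^ 2 = 1 := by
    intro j
    have h1 : (star W * W) j j = 1 := by rw [hWuW]; simp [Matrix.one_apply]
    have h2 : ∑ i, star W j i * W i j = 1 := by rw [← Matrix.mul_apply]; exact h1
    simpa [Matrix.star_apply, sq, mul_comm] using h2
  have hSmem : S ∈ doublyStochastic ℝ (Fin N) := by
    rw [mem_doublyStochastic_iff_sum]
    refine ⟨fun i j => sq_nonneg _, fun i => ?_, fun j => ?_⟩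
    · exact (Equiv.sum_comp τ.symm (fun j => W (σ.symm i) j ^ 2)).trans (hrow _)
    · exact (Equiv.sum_comp σ.symm (fun i => W i (τ.symm j) ^ 2)).trans (hcol _)
  -- reindexing the trace formula
  have hreindex : ∑ i, ∑ j, (a i * b j) * W i j ^ 2 = ∑ i, ∑ j, S i j * (α i * β j) := by
    calc ∑ i, ∑ j, (a i * b j) * W i j ^ 2
        = ∑ i, ∑ j, S (σ i) (τ j) * (α (σ i) * β (τ j)) := by
          refine Finset.sum_congr rfl fun i _ => Finset.sum_congr rfl fun j _ => ?_
          simp only [hSdef, Matrix.of_apply, Equiv.symm_apply_apply, hσ, hτ,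
            Function.comp_apply]
          ring
      _ = ∑ i, ∑ j, S (σ i) j * (α (σ i) * β j) := by
          refine Finset.sum_congr rfl fun i _ => ?_
          exact Equiv.sum_comp τ (fun j => S (σ i) j * (α (σ i) * β j))
      _ = ∑ i, ∑ j, S i j * (α i * β j) :=
          Equiv.sum_comp σ (fun i => ∑ j, S i j * (α i * β j))
  have hbound : trace (A * B) ≤ ∑ i, α i * β i := by
    rw [hABW, hreindex]; exact ds_pairing hSmem hαmono hβmono
  -- symmetry of entries
  have symA : ∀ i j, A j i = A i j := fun i j => by rw [← hA.apply i j, star_trivial]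
  have symB : ∀ i j, B j i = B i j := fun i j => by rw [← hB.apply i j, star_trivial]
  -- traces as entry sums
  have hTrAB : trace (A * B) = ∑ i, ∑ j, A i j * B i j := by
    rw [trace]
    refine Finset.sum_congr rfl fun i _ => ?_
    rw [diag_apply, mul_apply]
    exact Finset.sum_congr rfl fun j _ => by rw [symB i j]
  have hTrAA : trace (A * A) = ∑ i, ∑ j, A i j ^ 2 := by
    rw [trace]
    refine Finset.sum_congr rfl fun i _ => ?_
    rw [diag_apply, mul_apply]
    exact Finset.sum_congr rfl fun j _ => by rw [symA i j, sq]
  have hTrBB : trace (B * B) = ∑ i, ∑ j, B i j ^ 2 := by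
    rw [trace]
    refine Finset.sum_congr rfl fun i _ => ?_
    rw [diag_apply, mul_apply]
    exact Finset.sum_congr rfl fun j _ => by rw [symB i j, sq]
  -- expansions of the squares
  have expandR : ∑ i, ∑ j, (A i j - B i j) ^ 2
      = ∑ i, ∑ j, A i j ^ 2 - 2 * (∑ i, ∑ j, A i j * B i j) + ∑ i, ∑ j, B i j ^ 2 := by
    have h : ∀ i j : Fin N, (A i j - B i j) ^ 2
        = A i j ^ 2 - 2 * (A i j * B i j) + B i j ^ 2 := by intros; ring
    simp only [h, Finset.sum_add_distrib, Finset.sum_sub_distrib, Finset.mul_sum]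
  have expandL : ∑ i, (α i - β i) ^ 2
      = ∑ i, α i ^ 2 - 2 * (∑ i, α i * β i) + ∑ i, β i ^ 2 := by
    have h : ∀ i : Fin N, (α i - β i) ^ 2
        = α i ^ 2 - 2 * (α i * β i) + β i ^ 2 := by intros; ring
    simp only [h, Finset.sum_add_distrib, Finset.sum_sub_distrib, Finset.mul_sum]
  linarith [hbound, hAA, hBB, hTrAA, hTrBB, hTrAB, sumA2, sumB2, expandL, expandR]
end

section
/- For symmetric matrices A, B ∈ ℝ^{N×N} with eigenvalues α_1 ≤ … ≤ α_N and β_1 ≤ … ≤ β_N, the sorted eigenvalue vectors satisfy ‖α − β‖_1 ≤ √N · ‖A − B‖_F. -/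
/-!
Diagonalize `A = U diag(a) Uᵀ` and `B = V diag(b) Vᵀ`. Then
`‖A - B‖_F² = ∑ aᵢ² + ∑ bᵢ² - 2 tr(AB)` and `tr(AB) = ∑ᵢⱼ aᵢ bⱼ Wᵢⱼ²` with `W = UᵀV` orthogonal,
so `(Wᵢⱼ²)` is doubly stochastic. By Birkhoff's theorem this bilinear expression is maximal at a
permutation matrix, and by the rearrangement inequality at the one pairing the eigenvalues in
sorted order: `tr(AB) ≤ ∑ αᵢ βᵢ`, i.e. `‖α - β‖₂ ≤ ‖A - B‖_F` (Hoffman–Wielandt).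
Cauchy–Schwarz `‖x‖₁ ≤ √N ‖x‖₂` finishes.
-/

open Matrix Finset

lemma exists_perm_comp_eq_of_map_univ_eq {α : Type*} [LinearOrder α] {n : ℕ} {f g : Fin n → α}
    (hf : Monotone f) (h : Multiset.map f univ.val = Multiset.map g univ.val) :
    ∃ σ : Equiv.Perm (Fin n), g ∘ σ = f := by
  rw [Fin.univ_val_map, Fin.univ_val_map, Multiset.coe_eq_coe] at h
  refine ⟨Tuple.sort g, List.ofFn_injective ?_⟩
  exact ((Tuple.sort g).ofFn_comp_perm g |>.trans h.symm).eq_of_sortedLE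
    (Tuple.monotone_sort g).sortedLE_ofFn hf.sortedLE_ofFn

variable {n : Type*} [Fintype n]

lemma Matrix.IsHermitian.sum_sq_sub_eq_trace {A B : Matrix n n ℝ} (hA : A.IsHermitian)
    (hB : B.IsHermitian) :
    ∑ i, ∑ j, (A i j - B i j) ^ 2 = trace (A * A) - 2 * trace (A * B) + trace (B * B) := by
  have hsymm : (A - B)ᵀ = A - B := by
    rw [← conjTranspose_eq_transpose_of_trivial]; exact (hA.sub hB).eq
  have hfrob : ∑ i, ∑ j, (A i j - B i j) ^ 2 = trace ((A - B) * (A - B)ᵀ) := by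
    simp [trace, mul_apply, sq]
  rw [hfrob, hsymm, sub_mul, mul_sub, mul_sub, trace_sub, trace_sub, trace_sub,
    trace_mul_comm B A]
  ring

variable [DecidableEq n]

lemma sum_mul_le_of_mem_doublyStochastic {c S : Matrix n n ℝ} {M : ℝ}
    (hc : ∀ σ : Equiv.Perm n, ∑ i, c i (σ i) ≤ M) (hS : S ∈ doublyStochastic ℝ n) :
    ∑ i, ∑ j, c i j * S i j ≤ M := by
  have hlin : IsLinearMap ℝ fun T : Matrix n n ℝ => ∑ i, ∑ j, c i j * T i j :=
    ⟨fun _ _ => by simp only [Matrix.add_apply, mul_add, sum_add_distrib],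
     fun _ _ => by simp only [Matrix.smul_apply, smul_eq_mul, mul_sum, mul_left_comm]⟩
  rw [← SetLike.mem_coe, doublyStochastic_eq_convexHull_permMatrix] at hS
  refine convexHull_min ?_ (convex_halfSpace_le hlin M) hS
  rintro _ ⟨σ, rfl⟩
  simpa [Equiv.Perm.permMatrix, PEquiv.toMatrix_apply, eq_comm] using hc σ

lemma sum_mul_mul_le_of_mem_doublyStochastic {a b : n → ℝ} {S : Matrix n n ℝ}
    {σ τ : Equiv.Perm n} (h : Monovary (a ∘ σ) (b ∘ τ)) (hS : S ∈ doublyStochastic ℝ n) :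
    ∑ i, ∑ j, a i * b j * S i j ≤ ∑ i, a (σ i) * b (τ i) := by
  refine sum_mul_le_of_mem_doublyStochastic (c := of fun i j => a i * b j) (fun π => ?_) hS
  calc ∑ i, a i * b (π i) = ∑ i, (a ∘ σ) i * (b ∘ τ) ((σ.trans (π.trans τ.symm)) i) := by
        rw [← Equiv.sum_comp σ]; simp
    _ ≤ ∑ i, a (σ i) * b (τ i) := h.sum_mul_comp_perm_le_sum_mul

lemma of_sq_mem_doublyStochastic_of_mem_orthogonalGroup {W : Matrix n n ℝ}
    (hW : W ∈ orthogonalGroup n ℝ) :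
    of (fun i j => W i j ^ 2) ∈ doublyStochastic ℝ n := by
  refine mem_doublyStochastic_iff_sum.mpr ⟨fun _ _ => sq_nonneg _, fun i => ?_, fun j => ?_⟩
  · simpa [mul_apply, sq] using congrFun (congrFun ((mem_orthogonalGroup_iff n ℝ).mp hW) i) i
  · simpa [mul_apply, sq] using congrFun (congrFun ((mem_orthogonalGroup_iff' n ℝ).mp hW) j) j

lemma trace_diagonal_mul_mul_diagonal_mul_transpose (a b : n → ℝ) (W : Matrix n n ℝ) :
    trace (diagonal a * W * diagonal b * Wᵀ) = ∑ i, ∑ j, a i * b j * W i j ^ 2 := by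
  simp only [trace, diag_apply, mul_apply, transpose_apply, diagonal_apply, ite_mul, mul_ite,
    zero_mul, mul_zero, sum_ite_eq, sum_ite_eq', mem_univ, if_true]
  refine sum_congr rfl fun i _ => sum_congr rfl fun j _ => by ring

lemma trace_conj_diagonal_mul_conj_diagonal (U V : Matrix n n ℝ) (a b : n → ℝ) :
    trace (U * diagonal a * Uᵀ * (V * diagonal b * Vᵀ)) =
      ∑ i, ∑ j, a i * b j * (Uᵀ * V) i j ^ 2 := by
  rw [← trace_diagonal_mul_mul_diagonal_mul_transpose, transpose_mul, transpose_transpose]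
  simp only [Matrix.mul_assoc]
  rw [trace_mul_comm]
  simp only [Matrix.mul_assoc]

namespace Matrix.IsHermitian

variable {A B : Matrix n n ℝ}

lemma eigenvectorUnitary_mem_orthogonalGroup (hA : A.IsHermitian) :
    (hA.eigenvectorUnitary : Matrix n n ℝ) ∈ orthogonalGroup n ℝ :=
  hA.eigenvectorUnitary.2

lemma eq_conj_diagonal_eigenvalues (hA : A.IsHermitian) :
    A = hA.eigenvectorUnitary * diagonal hA.eigenvalues *
      (hA.eigenvectorUnitary : Matrix n n ℝ)ᵀ := by
  conv_lhs => rw [hA.spectral_theorem]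
  simp [Unitary.conjStarAlgAut_apply, star_eq_conjTranspose, conjTranspose_eq_transpose_of_trivial]

lemma trace_mul_self (hA : A.IsHermitian) : trace (A * A) = ∑ i, hA.eigenvalues i ^ 2 := by
  conv_lhs => rw [hA.eq_conj_diagonal_eigenvalues]
  rw [trace_conj_diagonal_mul_conj_diagonal,
    (mem_orthogonalGroup_iff' n ℝ).mp hA.eigenvectorUnitary_mem_orthogonalGroup]
  simp [one_apply, sq]

lemma trace_mul_le_sum_eigenvalues_mul (hA : A.IsHermitian) (hB : B.IsHermitian)
    {σ τ : Equiv.Perm n} (h : Monovary (hA.eigenvalues ∘ σ) (hB.eigenvalues ∘ τ)) :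
    trace (A * B) ≤ ∑ i, hA.eigenvalues (σ i) * hB.eigenvalues (τ i) := by
  have hW : (hA.eigenvectorUnitary : Matrix n n ℝ)ᵀ * hB.eigenvectorUnitary ∈
      orthogonalGroup n ℝ :=
    mul_mem (transpose_mem_unitaryGroup_iff.mpr hA.eigenvectorUnitary_mem_orthogonalGroup)
      hB.eigenvectorUnitary_mem_orthogonalGroup
  conv_lhs => rw [hA.eq_conj_diagonal_eigenvalues, hB.eq_conj_diagonal_eigenvalues]
  rw [trace_conj_diagonal_mul_conj_diagonal]
  exact sum_mul_mul_le_of_mem_doublyStochastic h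
    (of_sq_mem_doublyStochastic_of_mem_orthogonalGroup hW)

theorem sum_sq_sub_sorted_eigenvalues_le {N : ℕ} {A B : Matrix (Fin N) (Fin N) ℝ}
    (hA : A.IsHermitian) (hB : B.IsHermitian) {α β : Fin N → ℝ}
    (hαmono : Monotone α) (hβmono : Monotone β)
    (hα : Multiset.map α univ.val = Multiset.map hA.eigenvalues univ.val)
    (hβ : Multiset.map β univ.val = Multiset.map hB.eigenvalues univ.val) :
    ∑ i, (α i - β i) ^ 2 ≤ ∑ i, ∑ j, (A i j - B i j) ^ 2 := by
  obtain ⟨σ, rfl⟩ := exists_perm_comp_eq_of_map_univ_eq hαmono hα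
  obtain ⟨τ, rfl⟩ := exists_perm_comp_eq_of_map_univ_eq hβmono hβ
  have htrace := hA.trace_mul_le_sum_eigenvalues_mul hB (hαmono.monovary hβmono)
  have hsqA := Equiv.sum_comp σ fun i => hA.eigenvalues i ^ 2
  have hsqB := Equiv.sum_comp τ fun i => hB.eigenvalues i ^ 2
  rw [hA.sum_sq_sub_eq_trace hB, hA.trace_mul_self, hB.trace_mul_self]
  simp only [Function.comp_apply, sub_sq, sum_add_distrib, sum_sub_distrib, mul_assoc, ← mul_sum]
  linarith

end Matrix.IsHermitian

lemma sum_abs_le_sqrt_card_mul_sqrt_sum_sq {ι : Type*} (s : Finset ι) (f : ι → ℝ) :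
    ∑ i ∈ s, |f i| ≤ √(#s : ℝ) * √(∑ i ∈ s, f i ^ 2) := by
  rw [← Real.sqrt_mul (Nat.cast_nonneg _)]
  apply Real.le_sqrt_of_sq_le
  simpa only [sq_abs] using sq_sum_le_card_mul_sum_sq (s := s) (f := fun i => |f i|)

/-- for real symmetric `A, B` with sorted eigenvalue vectors `α, β`,
`‖α - β‖₁ ≤ √N · ‖A - B‖_F`. -/
theorem stmt5 (N : ℕ) (A B : Matrix (Fin N) (Fin N) ℝ)
    (hA : A.IsHermitian) (hB : B.IsHermitian)
    (α β : Fin N → ℝ) (hαmono : Monotone α) (hβmono : Monotone β)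
    (hα : Multiset.map α Finset.univ.val = Multiset.map hA.eigenvalues Finset.univ.val)
    (hβ : Multiset.map β Finset.univ.val = Multiset.map hB.eigenvalues Finset.univ.val) :
    ∑ i, |α i - β i| ≤ Real.sqrt N * Real.sqrt (∑ i, ∑ j, (A i j - B i j) ^ 2) := by
  calc ∑ i, |α i - β i| ≤ √N * √(∑ i, (α i - β i) ^ 2) := by
        simpa using sum_abs_le_sqrt_card_mul_sqrt_sum_sq univ fun i => α i - β i
    _ ≤ √N * √(∑ i, ∑ j, (A i j - B i j) ^ 2) := by
        gcongr _ * √?_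
        exact hA.sum_sq_sub_sorted_eigenvalues_le hB hαmono hβmono hα hβ
end
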